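/- arXiv:2409.15165 — 9 statements merged into one kernel-verified Lean document; each statement's English description precedes it below -/
import Mathlib

section
/- Let A = [[A_CC, A_CF],[A_FC, A_FF]] with A_FF invertible and with the Schur complement S invertible. Perform one coarse-grid correction with the ideal interpolation P̂, ideal restriction R̂ and exact coarse solve starting from a smoothed iterate x_s with x_{s,C} = 0 (i.e., smoothing is applied only to the fine points). If ‖b_F − A_FF·x_{s,F}‖₁ < ε for some ε > 0, then the resulting residual r = b − A·x¹ satisfies ‖r‖₁ ≤ C·ε with C = 1 + ‖A_CF·A_FF⁻¹‖, where ‖A_CF·A_FF⁻¹‖ denotes the operator norm of A_CF·A_FF⁻¹ induced by the ℓ¹ vector norms, and the ℓ¹ norm of a block vector over C ⊕ F is the sum of the ℓ¹ norms of its two blocks. -/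
open Matrix

/-- The ℓ¹ norm of a vector. -/
noncomputable def l1Norm {ι : Type*} [Fintype ι] (v : ι → ℝ) : ℝ := ∑ i, |v i|

/-- The operator norm of a matrix induced by the ℓ¹ vector norms. -/
noncomputable def l1OpNorm {ι κ : Type*} [Fintype ι] [Fintype κ] (M : Matrix ι κ ℝ) : ℝ :=
  sSup ((fun v => l1Norm (M.mulVec v)) '' {v : κ → ℝ | l1Norm v ≤ 1})

lemma l1Norm_nonneg {ι : Type*} [Fintype ι] (v : ι → ℝ) : 0 ≤ l1Norm v :=
  Finset.sum_nonneg fun _ _ => abs_nonneg _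

lemma l1Norm_smul {ι : Type*} [Fintype ι] (c : ℝ) (v : ι → ℝ) :
    l1Norm (c • v) = |c| * l1Norm v := by
  simp [l1Norm, abs_mul, Finset.mul_sum]

lemma l1Norm_mulVec_le {ι κ : Type*} [Fintype ι] [Fintype κ] (M : Matrix ι κ ℝ) (v : κ → ℝ) :
    l1Norm (M.mulVec v) ≤ (∑ i, ∑ j, |M i j|) * l1Norm v := by
  calc l1Norm (M.mulVec v) ≤ ∑ i, ∑ j, |M i j| * |v j| := by
        refine Finset.sum_le_sum fun i _ => ?_
        simpa [abs_mul, Matrix.mulVec, dotProduct] using Finset.abs_sum_le_sum_abs (fun j => M i j * v j) Finset.univ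
    _ ≤ ∑ i, ∑ j, |M i j| * l1Norm v := by
        refine Finset.sum_le_sum fun i _ => Finset.sum_le_sum fun j _ => ?_
        exact mul_le_mul_of_nonneg_left (Finset.single_le_sum
          (fun k _ => abs_nonneg (v k)) (Finset.mem_univ j)) (abs_nonneg _)
    _ = (∑ i, ∑ j, |M i j|) * l1Norm v := by rw [Finset.sum_mul]; simp [Finset.sum_mul]

lemma l1OpNorm_bddAbove {ι κ : Type*} [Fintype ι] [Fintype κ] (M : Matrix ι κ ℝ) :
    BddAbove ((fun v => l1Norm (M.mulVec v)) '' {v : κ → ℝ | l1Norm v ≤ 1}) := by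
  refine ⟨∑ i, ∑ j, |M i j|, ?_⟩
  rintro x ⟨v, hv, rfl⟩
  calc l1Norm (M.mulVec v) ≤ (∑ i, ∑ j, |M i j|) * l1Norm v := l1Norm_mulVec_le M v
    _ ≤ (∑ i, ∑ j, |M i j|) * 1 := by
        exact mul_le_mul_of_nonneg_left hv
          (Finset.sum_nonneg fun _ _ => Finset.sum_nonneg fun _ _ => abs_nonneg _)
    _ = ∑ i, ∑ j, |M i j| := mul_one _

lemma l1OpNorm_nonneg {ι κ : Type*} [Fintype ι] [Fintype κ] (M : Matrix ι κ ℝ) :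
    0 ≤ l1OpNorm M := by
  have h0 : (0 : ℝ) ∈ (fun v => l1Norm (M.mulVec v)) '' {v : κ → ℝ | l1Norm v ≤ 1} := by
    refine ⟨0, ?_, ?_⟩ <;> simp [l1Norm]
  exact le_csSup (l1OpNorm_bddAbove M) h0

lemma l1Norm_mulVec_le_opNorm {ι κ : Type*} [Fintype ι] [Fintype κ]
    (M : Matrix ι κ ℝ) (v : κ → ℝ) :
    l1Norm (M.mulVec v) ≤ l1OpNorm M * l1Norm v := by
  rcases eq_or_lt_of_le (l1Norm_nonneg v) with h | h
  · have hv : v = 0 := by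
      funext j
      have := (Finset.sum_eq_zero_iff_of_nonneg (fun k _ => abs_nonneg (v k))).mp h.symm
      simpa using abs_eq_zero.mp (this j (Finset.mem_univ j))
    simp [hv, l1Norm]
  · set c := l1Norm v with hc
    have hmem : (l1Norm v)⁻¹ • v ∈ {v : κ → ℝ | l1Norm v ≤ 1} := by
      simp only [Set.mem_setOf_eq, l1Norm_smul, abs_of_pos (inv_pos.mpr h)]
      have h' : 0 < l1Norm v := h
      rw [abs_of_pos (inv_pos.mpr h'), inv_mul_cancel₀ h'.ne']
    have hle : l1Norm (M.mulVec ((l1Norm v)⁻¹ • v)) ≤ l1OpNorm M :=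
      le_csSup (l1OpNorm_bddAbove M) ⟨_, hmem, rfl⟩
    have : l1Norm (M.mulVec ((l1Norm v)⁻¹ • v)) = (l1Norm v)⁻¹ * l1Norm (M.mulVec v) := by
      rw [Matrix.mulVec_smul, l1Norm_smul, abs_of_pos (inv_pos.mpr h)]
    rw [this] at hle
    calc l1Norm (M.mulVec v) = l1Norm v * ((l1Norm v)⁻¹ * l1Norm (M.mulVec v)) := by
          rw [← mul_assoc, mul_inv_cancel₀ (show l1Norm v ≠ 0 from h.ne'), one_mul]
      _ ≤ l1Norm v * l1OpNorm M := mul_le_mul_of_nonneg_left hle h.le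
      _ = l1OpNorm M * l1Norm v := mul_comm _ _

lemma l1Norm_sum_elim {ι κ : Type*} [Fintype ι] [Fintype κ] (u : ι → ℝ) (v : κ → ℝ) :
    l1Norm (Sum.elim u v) = l1Norm u + l1Norm v := by
  simp [l1Norm, Fintype.sum_sum_type]

/-- If only the fine points are smoothed (`x_{s,C} = 0`) and the fine residual satisfies
`‖b_F − A_FF·x_{s,F}‖₁ < ε`, then after one coarse-grid correction with ideal transfer
operators and exact coarse solve, `‖r‖₁ ≤ (1 + ‖A_CF·A_FF⁻¹‖)·ε`. -/
theorem residual_bound_F_relaxation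
    {C F : Type*} [Fintype C] [Fintype F] [DecidableEq C] [DecidableEq F]
    (A_CC : Matrix C C ℝ) (A_CF : Matrix C F ℝ) (A_FC : Matrix F C ℝ) (A_FF : Matrix F F ℝ)
    (hFF : IsUnit A_FF.det)
    (hS : IsUnit (A_CC - A_CF * A_FF⁻¹ * A_FC).det)
    (A : Matrix (C ⊕ F) (C ⊕ F) ℝ) (hA : A = fromBlocks A_CC A_CF A_FC A_FF)
    (Phat : Matrix (C ⊕ F) C ℝ) (hP : Phat = fromRows 1 (-(A_FF⁻¹ * A_FC)))
    (Rhat : Matrix C (C ⊕ F) ℝ) (hR : Rhat = fromCols 1 (-(A_CF * A_FF⁻¹)))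
    (bC : C → ℝ) (bF xsF : F → ℝ)
    (b : C ⊕ F → ℝ) (hb : b = Sum.elim bC bF)
    (xs : C ⊕ F → ℝ) (hxs : xs = Sum.elim (0 : C → ℝ) xsF)
    (x1 : C ⊕ F → ℝ)
    (hx1 : x1 = xs + Phat.mulVec ((Rhat * A * Phat)⁻¹.mulVec (Rhat.mulVec (b - A.mulVec xs))))
    (ε : ℝ) (hε : 0 < ε)
    (hsmooth : l1Norm (bF - A_FF.mulVec xsF) < ε) :
    l1Norm (b - A.mulVec x1) ≤ (1 + l1OpNorm (A_CF * A_FF⁻¹)) * ε := by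
  set S := A_CC - A_CF * A_FF⁻¹ * A_FC with hSdef
  set M := A_CF * A_FF⁻¹ with hM
  set rC := bC - A_CF.mulVec xsF with hrC
  set rF := bF - A_FF.mulVec xsF with hrF
  -- A * Phat = fromRows S 0
  have hAP : A * Phat = fromRows S 0 := by
    rw [hA, hP, fromBlocks_mul_fromRows, Matrix.mul_one, Matrix.mul_one,
      Matrix.mul_neg, Matrix.mul_neg, hSdef, hM, sub_eq_add_neg, Matrix.mul_assoc,
      ← Matrix.mul_assoc A_FF, Matrix.mul_nonsing_inv _ hFF, Matrix.one_mul]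
    simp
  -- Rhat * A * Phat = S
  have hRAP : Rhat * A * Phat = S := by
    rw [Matrix.mul_assoc, hAP, hR, fromCols_mul_fromRows, Matrix.one_mul]
    simp
  -- residual of smoothed iterate
  have hrs : b - A.mulVec xs = Sum.elim rC rF := by
    rw [hb, hA, hxs, fromBlocks_mulVec]
    funext i
    cases i <;> simp [hrC, hrF, Pi.sub_apply]
  -- Rhat applied to rs
  have hRrs : Rhat.mulVec (Sum.elim rC rF) = rC - M.mulVec rF := by
    rw [hR, fromCols_mulVec_sumElim, Matrix.one_mulVec]
    simp [sub_eq_add_neg, Matrix.neg_mulVec]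
  -- compute the residual
  have hres : b - A.mulVec x1 = Sum.elim (M.mulVec rF) rF := by
    have hx1' : A.mulVec x1 = A.mulVec xs +
        (A * Phat).mulVec (S⁻¹.mulVec (rC - M.mulVec rF)) := by
      rw [hx1, Matrix.mulVec_add, Matrix.mulVec_mulVec, hRAP, hrs, hRrs]
    rw [hx1', hAP]
    have : (fromRows S (0 : Matrix F C ℝ)).mulVec (S⁻¹.mulVec (rC - M.mulVec rF)) =
        Sum.elim (rC - M.mulVec rF) 0 := by
      rw [fromRows_mulVec, Matrix.mulVec_mulVec, Matrix.mul_nonsing_inv _ hS,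
        Matrix.one_mulVec, Matrix.zero_mulVec]
    rw [this]
    have hrw : b - (A.mulVec xs + Sum.elim (rC - M.mulVec rF) 0)
        = (b - A.mulVec xs) - Sum.elim (rC - M.mulVec rF) 0 := by ring_nf
    rw [hrw, hrs]
    funext i
    cases i <;> simp [Pi.sub_apply]
  rw [hres, l1Norm_sum_elim]
  have h1 : l1Norm (M.mulVec rF) ≤ l1OpNorm M * ε := by
    calc l1Norm (M.mulVec rF) ≤ l1OpNorm M * l1Norm rF := l1Norm_mulVec_le_opNorm M rF
      _ ≤ l1OpNorm M * ε := mul_le_mul_of_nonneg_left hsmooth.le (l1OpNorm_nonneg M)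
  have h2 : l1Norm rF ≤ ε := hsmooth.le
  nlinarith [l1OpNorm_nonneg M]
end

section
/- Let A = [[A_CC, A_CF],[A_FC, A_FF]] with A_FF invertible. Let P = [I; P_FC] be an interpolation operator, R = [I, R_CF] a restriction operator, A_H an invertible C×C matrix (the coarse grid operator), Q = [0; I], and define the fine-point smoother by B_F⁻¹ = Q·(Qᵀ·A·Q)⁻¹·Qᵀ = Q·A_FF⁻¹·Qᵀ. Define the two-level preconditioner M = [[I, −R_CF],[0, I]] · [[A_H, 0],[0, A_FF]] · [[I, 0],[−P_FC, I]]. Then M is invertible, M⁻¹ = P·A_H⁻¹·R + Q·A_FF⁻¹·Qᵀ, and consequently I − M⁻¹·A = I − P·A_H⁻¹·R·A − B_F⁻¹·A. -/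
open Matrix

/-- The two-level preconditioner `M = [[I,−R_CF],[0,I]]·[[A_H,0],[0,A_FF]]·[[I,0],[−P_FC,I]]`
is invertible, its inverse is `P·A_H⁻¹·R + Q·A_FF⁻¹·Qᵀ`, and hence
`I − M⁻¹·A = I − P·A_H⁻¹·R·A − B_F⁻¹·A`. -/
theorem two_level_preconditioner_inverse
    {C F : Type*} [Fintype C] [Fintype F] [DecidableEq C] [DecidableEq F]
    (A_CC : Matrix C C ℝ) (A_CF : Matrix C F ℝ) (A_FC : Matrix F C ℝ) (A_FF : Matrix F F ℝ)
    (A_H : Matrix C C ℝ) (P_FC : Matrix F C ℝ) (R_CF : Matrix C F ℝ)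
    (hFF : IsUnit A_FF.det) (hAH : IsUnit A_H.det)
    (A : Matrix (C ⊕ F) (C ⊕ F) ℝ) (hA : A = fromBlocks A_CC A_CF A_FC A_FF)
    (P : Matrix (C ⊕ F) C ℝ) (hP : P = fromRows 1 P_FC)
    (R : Matrix C (C ⊕ F) ℝ) (hR : R = fromCols 1 R_CF)
    (Q : Matrix (C ⊕ F) F ℝ) (hQ : Q = fromRows 0 1)
    (BFinv : Matrix (C ⊕ F) (C ⊕ F) ℝ) (hB : BFinv = Q * (Qᵀ * A * Q)⁻¹ * Qᵀ)
    (M : Matrix (C ⊕ F) (C ⊕ F) ℝ)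
    (hM : M = fromBlocks 1 (-R_CF) 0 1 * fromBlocks A_H 0 0 A_FF * fromBlocks 1 0 (-P_FC) 1) :
    IsUnit M.det ∧
      M⁻¹ = P * A_H⁻¹ * R + Q * A_FF⁻¹ * Qᵀ ∧
      BFinv = Q * A_FF⁻¹ * Qᵀ ∧
      1 - M⁻¹ * A = 1 - P * A_H⁻¹ * R * A - BFinv * A := by
  subst hA hP hR hQ hB hM
  have hdet : IsUnit (Matrix.det (fromBlocks (1:Matrix C C ℝ) (-R_CF) (0:Matrix F C ℝ) (1:Matrix F F ℝ) * fromBlocks A_H 0 0 A_FF *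
      fromBlocks (1:Matrix C C ℝ) (0:Matrix C F ℝ) (-P_FC) (1:Matrix F F ℝ))) := by
    simp only [Matrix.det_mul, Matrix.det_fromBlocks_zero₂₁, Matrix.det_fromBlocks_zero₁₂,
      Matrix.det_one, one_mul, mul_one]
    exact hAH.mul hFF
  have hQAQ : (fromRows (0:Matrix C F ℝ) (1:Matrix F F ℝ))ᵀ * fromBlocks A_CC A_CF A_FC A_FF *
      fromRows (0:Matrix C F ℝ) (1:Matrix F F ℝ) = A_FF := by
    rw [Matrix.transpose_fromRows, Matrix.transpose_zero, Matrix.transpose_one,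
      Matrix.fromCols_mul_fromBlocks, Matrix.fromCols_mul_fromRows]
    simp
  have hsum : fromRows (1:Matrix C C ℝ) P_FC * A_H⁻¹ * fromCols 1 R_CF +
      fromRows (0:Matrix C F ℝ) (1:Matrix F F ℝ) * A_FF⁻¹ * (fromRows (0:Matrix C F ℝ) (1:Matrix F F ℝ))ᵀ =
      fromBlocks A_H⁻¹ (A_H⁻¹ * R_CF) (P_FC * A_H⁻¹) (P_FC * A_H⁻¹ * R_CF + A_FF⁻¹) := by
    rw [Matrix.transpose_fromRows, Matrix.transpose_zero, Matrix.transpose_one,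
      Matrix.fromRows_mul 1 P_FC A_H⁻¹, Matrix.fromRows_mul 0 1 A_FF⁻¹,
      Matrix.fromRows_mul_fromCols, Matrix.fromRows_mul_fromCols,
      Matrix.fromBlocks_add]
    simp
  have hinv : (fromBlocks (1:Matrix C C ℝ) (-R_CF) (0:Matrix F C ℝ) (1:Matrix F F ℝ) * fromBlocks A_H 0 0 A_FF *
      fromBlocks (1:Matrix C C ℝ) (0:Matrix C F ℝ) (-P_FC) (1:Matrix F F ℝ))⁻¹ =
      fromRows (1:Matrix C C ℝ) P_FC * A_H⁻¹ * fromCols 1 R_CF +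
      fromRows (0:Matrix C F ℝ) (1:Matrix F F ℝ) * A_FF⁻¹ * (fromRows (0:Matrix C F ℝ) (1:Matrix F F ℝ))ᵀ := by
    apply Matrix.inv_eq_right_inv
    rw [hsum]
    have hAHi : A_H * A_H⁻¹ = 1 := Matrix.mul_nonsing_inv _ hAH
    have hFFi : A_FF * A_FF⁻¹ = 1 := Matrix.mul_nonsing_inv _ hFF
    simp only [Matrix.fromBlocks_multiply, Matrix.mul_one, Matrix.one_mul, Matrix.mul_zero,
      Matrix.zero_mul, add_zero, zero_add, neg_mul, Matrix.mul_neg]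
    rw [← Matrix.fromBlocks_one, Matrix.fromBlocks_inj]
    refine ⟨?_, ?_, ?_, ?_⟩ <;>
      simp only [add_zero, zero_add, Matrix.zero_mul, Matrix.mul_zero, Matrix.neg_mul,
        Matrix.mul_neg, neg_neg, Matrix.mul_add, Matrix.add_mul, Matrix.mul_assoc,
        Matrix.mul_nonsing_inv_cancel_left _ _ hAH, Matrix.mul_nonsing_inv_cancel_left _ _ hFF,
        hAHi, hFFi, Matrix.mul_one, Matrix.one_mul] <;>
      abel
  refine ⟨hdet, hinv, by rw [hQAQ], ?_⟩
  rw [hinv, hQAQ]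
  noncomm_ring
end

section
/- In the setting of the two-level preconditioner M = [[I, −R_CF],[0, I]] · [[A_H, 0],[0, A_FF]] · [[I, 0],[−P_FC, I]] with A_FF and A_H invertible, if the restriction operator R = [I, R_CF] satisfies R·A·Q = 0, then I − M⁻¹·A = (I − P·A_H⁻¹·R·A)·(I − B_F⁻¹·A), where P = [I; P_FC], Q = [0; I], and B_F⁻¹ = Q·A_FF⁻¹·Qᵀ. -/
open Matrix

/-- If the restriction operator satisfies `R·A·Q = 0`, the additive two-level method
coincides with the multiplicative one with pre-smoothing:
`I − M⁻¹·A = (I − P·A_H⁻¹·R·A)·(I − B_F⁻¹·A)`. -/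
theorem additive_eq_multiplicative_presmoothing
    {C F : Type*} [Fintype C] [Fintype F] [DecidableEq C] [DecidableEq F]
    (A_CC : Matrix C C ℝ) (A_CF : Matrix C F ℝ) (A_FC : Matrix F C ℝ) (A_FF : Matrix F F ℝ)
    (A_H : Matrix C C ℝ) (P_FC : Matrix F C ℝ) (R_CF : Matrix C F ℝ)
    (hFF : IsUnit A_FF.det) (hAH : IsUnit A_H.det)
    (A : Matrix (C ⊕ F) (C ⊕ F) ℝ) (hA : A = fromBlocks A_CC A_CF A_FC A_FF)
    (P : Matrix (C ⊕ F) C ℝ) (hP : P = fromRows 1 P_FC)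
    (R : Matrix C (C ⊕ F) ℝ) (hR : R = fromCols 1 R_CF)
    (Q : Matrix (C ⊕ F) F ℝ) (hQ : Q = fromRows 0 1)
    (BFinv : Matrix (C ⊕ F) (C ⊕ F) ℝ) (hB : BFinv = Q * A_FF⁻¹ * Qᵀ)
    (M : Matrix (C ⊕ F) (C ⊕ F) ℝ)
    (hM : M = fromBlocks 1 (-R_CF) 0 1 * fromBlocks A_H 0 0 A_FF * fromBlocks 1 0 (-P_FC) 1)
    (hRAQ : R * A * Q = 0) :
    1 - M⁻¹ * A = (1 - P * A_H⁻¹ * R * A) * (1 - BFinv * A) := by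
  have h1 : A_H * A_H⁻¹ = 1 := Matrix.mul_nonsing_inv _ hAH
  have h2 : A_FF * A_FF⁻¹ = 1 := Matrix.mul_nonsing_inv _ hFF
  have h3 : ∀ X : Matrix C C ℝ, A_H * (A_H⁻¹ * X) = X :=
    fun X => Matrix.mul_nonsing_inv_cancel_left _ _ hAH
  have h4 : ∀ X : Matrix F C ℝ, A_FF * (A_FF⁻¹ * X) = X :=
    fun X => Matrix.mul_nonsing_inv_cancel_left _ _ hFF
  have h3' : ∀ X : Matrix C F ℝ, A_H * (A_H⁻¹ * X) = X :=
    fun X => Matrix.mul_nonsing_inv_cancel_left _ _ hAH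
  have h4' : ∀ X : Matrix F F ℝ, A_FF * (A_FF⁻¹ * X) = X :=
    fun X => Matrix.mul_nonsing_inv_cancel_left _ _ hFF
  -- the explicit inverse of M
  set N : Matrix (C ⊕ F) (C ⊕ F) ℝ :=
    fromBlocks A_H⁻¹ (A_H⁻¹ * R_CF) (P_FC * A_H⁻¹) (P_FC * A_H⁻¹ * R_CF + A_FF⁻¹) with hN
  have hMN : M * N = 1 := by
    rw [hM, hN, ← fromBlocks_one]
    rw [fromBlocks_multiply, fromBlocks_multiply, fromBlocks_multiply]
    rw [fromBlocks_inj]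
    refine ⟨?_, ?_, ?_, ?_⟩ <;>
      simp only [Matrix.mul_add, Matrix.add_mul, Matrix.mul_one, Matrix.one_mul,
        Matrix.neg_mul, Matrix.mul_neg, Matrix.zero_mul, Matrix.mul_zero, Matrix.mul_assoc,
        h1, h2, h3, h4, h3', h4', add_zero, zero_add, neg_neg] <;>
      abel
  have hMinv : M⁻¹ = N := Matrix.inv_eq_right_inv hMN
  -- BFinv as a block matrix
  have hBblk : BFinv = fromBlocks 0 0 0 A_FF⁻¹ := by
    rw [hB, hQ, transpose_fromRows, Matrix.fromRows_mul, fromRows_mul_fromCols]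
    simp
  -- P * A_H⁻¹ * R as a block matrix
  have hPR : P * A_H⁻¹ * R =
      fromBlocks A_H⁻¹ (A_H⁻¹ * R_CF) (P_FC * A_H⁻¹) (P_FC * A_H⁻¹ * R_CF) := by
    rw [hP, hR, Matrix.fromRows_mul, fromRows_mul_fromCols]
    simp
  have hsum : N = BFinv + P * A_H⁻¹ * R := by
    rw [hBblk, hPR, hN, fromBlocks_add]
    simp [add_comm]
  -- R * A * BFinv = 0
  have hRB : R * A * BFinv = 0 := by
    rw [hB]
    simp only [← Matrix.mul_assoc, hRAQ, Matrix.zero_mul]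
  calc 1 - M⁻¹ * A = 1 - (BFinv + P * A_H⁻¹ * R) * A := by rw [hMinv, hsum]
    _ = (1 - P * A_H⁻¹ * R * A) * (1 - BFinv * A) := by
        have key : P * A_H⁻¹ * R * A * (BFinv * A) = P * A_H⁻¹ * (R * A * BFinv) * A := by
          simp only [Matrix.mul_assoc]
        rw [mul_sub, sub_mul, sub_mul, key, hRB, Matrix.mul_zero, Matrix.zero_mul,
          sub_zero, add_mul, one_mul, one_mul, Matrix.mul_one]
        abel
end

section
/- In the setting of the two-level preconditioner M = [[I, −R_CF],[0, I]] · [[A_H, 0],[0, A_FF]] · [[I, 0],[−P_FC, I]] with A_FF and A_H invertible, if the interpolation operator P = [I; P_FC] satisfies Qᵀ·A·P = 0, then I − M⁻¹·A = (I − B_F⁻¹·A)·(I − P·A_H⁻¹·R·A), where R = [I, R_CF], Q = [0; I], and B_F⁻¹ = Q·A_FF⁻¹·Qᵀ. -/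
open Matrix

/-- If the interpolation operator satisfies `Qᵀ·A·P = 0`, the additive two-level method
coincides with the multiplicative one with post-smoothing:
`I − M⁻¹·A = (I − B_F⁻¹·A)·(I − P·A_H⁻¹·R·A)`. -/
theorem additive_eq_multiplicative_postsmoothing
    {C F : Type*} [Fintype C] [Fintype F] [DecidableEq C] [DecidableEq F]
    (A_CC : Matrix C C ℝ) (A_CF : Matrix C F ℝ) (A_FC : Matrix F C ℝ) (A_FF : Matrix F F ℝ)
    (A_H : Matrix C C ℝ) (P_FC : Matrix F C ℝ) (R_CF : Matrix C F ℝ)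
    (hFF : IsUnit A_FF.det) (hAH : IsUnit A_H.det)
    (A : Matrix (C ⊕ F) (C ⊕ F) ℝ) (hA : A = fromBlocks A_CC A_CF A_FC A_FF)
    (P : Matrix (C ⊕ F) C ℝ) (hP : P = fromRows 1 P_FC)
    (R : Matrix C (C ⊕ F) ℝ) (hR : R = fromCols 1 R_CF)
    (Q : Matrix (C ⊕ F) F ℝ) (hQ : Q = fromRows 0 1)
    (BFinv : Matrix (C ⊕ F) (C ⊕ F) ℝ) (hB : BFinv = Q * A_FF⁻¹ * Qᵀ)
    (M : Matrix (C ⊕ F) (C ⊕ F) ℝ)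
    (hM : M = fromBlocks 1 (-R_CF) 0 1 * fromBlocks A_H 0 0 A_FF * fromBlocks 1 0 (-P_FC) 1)
    (hQAP : Qᵀ * A * P = 0) :
    1 - M⁻¹ * A = (1 - BFinv * A) * (1 - P * A_H⁻¹ * R * A) := by
  have hAHi : A_H * A_H⁻¹ = 1 := mul_nonsing_inv _ hAH
  have hFFi : A_FF * A_FF⁻¹ = 1 := mul_nonsing_inv _ hFF
  have hBblk : BFinv = fromBlocks 0 0 0 A_FF⁻¹ := by
    rw [hB, hQ, transpose_fromRows, transpose_zero, transpose_one, Matrix.fromRows_mul,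
      Matrix.fromRows_mul_fromCols]
    simp
  have hPR : P * A_H⁻¹ * R = fromBlocks A_H⁻¹ (A_H⁻¹ * R_CF) (P_FC * A_H⁻¹)
      (P_FC * A_H⁻¹ * R_CF) := by
    rw [hP, hR, Matrix.fromRows_mul, Matrix.fromRows_mul_fromCols, Matrix.one_mul,
      Matrix.mul_assoc]
    simp
  have hN : M⁻¹ = BFinv + P * A_H⁻¹ * R := by
    apply inv_eq_right_inv
    rw [hM, hBblk, hPR, Matrix.fromBlocks_add, Matrix.fromBlocks_multiply,
      Matrix.fromBlocks_multiply, Matrix.fromBlocks_multiply, ← Matrix.fromBlocks_one]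
    have h2 : A_H * (A_H⁻¹ * R_CF) = R_CF := by rw [← Matrix.mul_assoc, hAHi, Matrix.one_mul]
    simp only [Matrix.mul_zero, Matrix.zero_mul, Matrix.mul_one, Matrix.one_mul,
      Matrix.add_mul, Matrix.mul_add, Matrix.neg_mul, Matrix.mul_neg, zero_add, add_zero,
      neg_neg, Matrix.mul_assoc, hAHi, hFFi, h2]
    simp [hAHi, hFFi, h2, ← Matrix.mul_assoc, Matrix.mul_add, Matrix.add_mul]
    rw [← Matrix.fromBlocks_one]
    congr 1
    abel
  have hzero : BFinv * A * P = 0 := by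
    rw [hB]
    calc Q * A_FF⁻¹ * Qᵀ * A * P = Q * A_FF⁻¹ * (Qᵀ * A * P) := by
          simp only [Matrix.mul_assoc]
      _ = 0 := by rw [hQAP, Matrix.mul_zero]
  rw [hN]
  have : (BFinv + P * A_H⁻¹ * R) * A = BFinv * A + P * A_H⁻¹ * R * A := Matrix.add_mul _ _ _
  rw [this]
  have hcross : BFinv * A * (P * A_H⁻¹ * R * A) = 0 := by
    calc BFinv * A * (P * A_H⁻¹ * R * A) = BFinv * A * P * (A_H⁻¹ * R * A) := by
          simp only [Matrix.mul_assoc]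
      _ = 0 := by rw [hzero, Matrix.zero_mul]
  rw [Matrix.sub_mul, Matrix.mul_sub, Matrix.mul_sub, hcross, Matrix.one_mul, Matrix.one_mul, Matrix.mul_one]
  abel
end

section
/- Let A = [[A_CC, A_CF],[A_FC, A_FF]] with A_FF invertible and with the Schur complement S = A_CC − A_CF·A_FF⁻¹·A_FC invertible. Then A is invertible and A⁻¹ = P̂·(R̂·A·P̂)⁻¹·R̂ + Q·(Qᵀ·A·Q)⁻¹·Qᵀ, where P̂ = [I; −A_FF⁻¹·A_FC], R̂ = [I, −A_CF·A_FF⁻¹], Q = [0; I]. Consequently (I − P̂·(R̂·A·P̂)⁻¹·R̂·A)·(I − Q·(Qᵀ·A·Q)⁻¹·Qᵀ·A) = 0 and (I − Q·(Qᵀ·A·Q)⁻¹·Qᵀ·A)·(I − P̂·(R̂·A·P̂)⁻¹·R̂·A) = 0; that is, the two-level method with ideal transfer operators, exact fine-point smoothing, and exact coarse solve is a direct method. -/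
open Matrix

/-- With ideal transfer operators, exact fine-point smoothing and exact coarse solve,
the two-level method is a direct method:
`A⁻¹ = P̂·(R̂·A·P̂)⁻¹·R̂ + Q·(Qᵀ·A·Q)⁻¹·Qᵀ` and the two error propagation products vanish. -/
theorem two_level_direct_method
    {C F : Type*} [Fintype C] [Fintype F] [DecidableEq C] [DecidableEq F]
    (A_CC : Matrix C C ℝ) (A_CF : Matrix C F ℝ) (A_FC : Matrix F C ℝ) (A_FF : Matrix F F ℝ)
    (hFF : IsUnit A_FF.det)
    (hS : IsUnit (A_CC - A_CF * A_FF⁻¹ * A_FC).det)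
    (A : Matrix (C ⊕ F) (C ⊕ F) ℝ) (hA : A = fromBlocks A_CC A_CF A_FC A_FF)
    (Phat : Matrix (C ⊕ F) C ℝ) (hP : Phat = fromRows 1 (-(A_FF⁻¹ * A_FC)))
    (Rhat : Matrix C (C ⊕ F) ℝ) (hR : Rhat = fromCols 1 (-(A_CF * A_FF⁻¹)))
    (Q : Matrix (C ⊕ F) F ℝ) (hQ : Q = fromRows 0 1) :
    IsUnit A.det ∧
      A⁻¹ = Phat * (Rhat * A * Phat)⁻¹ * Rhat + Q * (Qᵀ * A * Q)⁻¹ * Qᵀ ∧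
      (1 - Phat * (Rhat * A * Phat)⁻¹ * Rhat * A) * (1 - Q * (Qᵀ * A * Q)⁻¹ * Qᵀ * A) = 0 ∧
      (1 - Q * (Qᵀ * A * Q)⁻¹ * Qᵀ * A) * (1 - Phat * (Rhat * A * Phat)⁻¹ * Rhat * A) = 0 := by
  set S : Matrix C C ℝ := A_CC - A_CF * A_FF⁻¹ * A_FC with hSdef
  have hFF1 : A_FF * A_FF⁻¹ = 1 := mul_nonsing_inv _ hFF
  have hS1 : S * S⁻¹ = 1 := mul_nonsing_inv _ hS
  have hQT : Qᵀ = fromCols 0 1 := by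
    rw [hQ, transpose_fromRows, transpose_zero, transpose_one]
  -- A * Phat = [S; 0]
  have hAP : A * Phat = fromRows S 0 := by
    rw [hA, hP, fromBlocks_mul_fromRows, Matrix.mul_one, Matrix.mul_one, Matrix.mul_neg,
      Matrix.mul_neg, ← Matrix.mul_assoc A_FF, hFF1, Matrix.one_mul, add_neg_cancel,
      ← Matrix.mul_assoc, ← sub_eq_add_neg, ← hSdef]
  -- Rhat * A = [S, 0]
  have hRA : Rhat * A = fromCols S 0 := by
    rw [hA, hR, fromCols_mul_fromBlocks, Matrix.one_mul, Matrix.one_mul, Matrix.neg_mul,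
      Matrix.neg_mul, Matrix.mul_assoc _ A_FF⁻¹ A_FF, nonsing_inv_mul _ hFF, Matrix.mul_one,
      add_neg_cancel, ← sub_eq_add_neg, ← hSdef]
  -- A * Q = [A_CF; A_FF]
  have hAQ : A * Q = fromRows A_CF A_FF := by
    rw [hA, hQ, fromBlocks_mul_fromRows, Matrix.mul_zero, Matrix.mul_one,
      Matrix.mul_zero, Matrix.mul_one, zero_add, zero_add]
  have hRAP : Rhat * A * Phat = S := by
    rw [Matrix.mul_assoc, hAP, hR, fromCols_mul_fromRows, Matrix.one_mul,
      Matrix.mul_zero, add_zero]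
  have hQAQ : Qᵀ * A * Q = A_FF := by
    rw [Matrix.mul_assoc, hAQ, hQT, fromCols_mul_fromRows, Matrix.zero_mul,
      Matrix.one_mul, zero_add]
  have hRAQ : Rhat * A * Q = 0 := by
    rw [hRA, hQ, fromCols_mul_fromRows, Matrix.mul_zero, Matrix.zero_mul, add_zero]
  have hQAP : Qᵀ * A * Phat = 0 := by
    rw [Matrix.mul_assoc, hAP, hQT, fromCols_mul_fromRows, Matrix.zero_mul,
      Matrix.one_mul, zero_add]
  have t1 : A * Phat * S⁻¹ * Rhat = fromBlocks 1 (-(A_CF * A_FF⁻¹)) 0 0 := by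
    rw [hAP, fromRows_mul, hS1, Matrix.zero_mul, hR, fromRows_mul_fromCols,
      Matrix.one_mul, Matrix.one_mul, Matrix.zero_mul, Matrix.zero_mul]
  have t2 : A * Q * A_FF⁻¹ * Qᵀ = fromBlocks 0 (A_CF * A_FF⁻¹) 0 1 := by
    rw [hAQ, fromRows_mul, hFF1, hQT, fromRows_mul_fromCols,
      Matrix.mul_zero, Matrix.mul_one, Matrix.one_mul, Matrix.one_mul]
  set X : Matrix (C ⊕ F) (C ⊕ F) ℝ := Phat * S⁻¹ * Rhat + Q * A_FF⁻¹ * Qᵀ with hXdef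
  have hAX : A * X = 1 := by
    rw [hXdef, Matrix.mul_add, ← Matrix.mul_assoc, ← Matrix.mul_assoc,
      ← Matrix.mul_assoc, ← Matrix.mul_assoc, t1, t2, fromBlocks_add, ← fromBlocks_one]
    simp
  have hU : IsUnit A.det := isUnit_det_of_right_inverse hAX
  have hAinv : A⁻¹ = X := inv_eq_right_inv hAX
  have hXA : X * A = 1 := by rw [← hAinv, nonsing_inv_mul _ hU]
  have hsum : Phat * S⁻¹ * Rhat * A + Q * A_FF⁻¹ * Qᵀ * A = 1 := by
    rw [← add_mul, ← hXdef, hXA]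
  refine ⟨hU, by rw [hRAP, hQAQ, hAinv, hXdef], ?_, ?_⟩
  · rw [hRAP, hQAQ]
    have h12 : Phat * S⁻¹ * Rhat * A * (Q * A_FF⁻¹ * Qᵀ * A) = 0 := by
      calc Phat * S⁻¹ * Rhat * A * (Q * A_FF⁻¹ * Qᵀ * A)
          = Phat * S⁻¹ * (Rhat * A * Q) * (A_FF⁻¹ * (Qᵀ * A)) := by
            simp only [Matrix.mul_assoc]
        _ = 0 := by rw [hRAQ, Matrix.mul_zero, Matrix.zero_mul]
    have e : (1 - Phat * S⁻¹ * Rhat * A) * (1 - Q * A_FF⁻¹ * Qᵀ * A) =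
        1 - (Phat * S⁻¹ * Rhat * A + Q * A_FF⁻¹ * Qᵀ * A) +
          Phat * S⁻¹ * Rhat * A * (Q * A_FF⁻¹ * Qᵀ * A) := by noncomm_ring
    rw [e, hsum, h12, sub_self, add_zero]
  · rw [hRAP, hQAQ]
    have h21 : Q * A_FF⁻¹ * Qᵀ * A * (Phat * S⁻¹ * Rhat * A) = 0 := by
      calc Q * A_FF⁻¹ * Qᵀ * A * (Phat * S⁻¹ * Rhat * A)
          = Q * A_FF⁻¹ * (Qᵀ * A * Phat) * (S⁻¹ * (Rhat * A)) := by
            simp only [Matrix.mul_assoc]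
        _ = 0 := by rw [hQAP, Matrix.mul_zero, Matrix.zero_mul]
    have e : (1 - Q * A_FF⁻¹ * Qᵀ * A) * (1 - Phat * S⁻¹ * Rhat * A) =
        1 - (Phat * S⁻¹ * Rhat * A + Q * A_FF⁻¹ * Qᵀ * A) +
          Q * A_FF⁻¹ * Qᵀ * A * (Phat * S⁻¹ * Rhat * A) := by noncomm_ring
    rw [e, hsum, h21, sub_self, add_zero]
end

section
/- Let A = [[A_CC, A_CF],[A_FC, A_FF]] with A_FF invertible, let S = A_CC − A_CF·A_FF⁻¹·A_FC, and let G_H be an invertible C×C matrix (the approximate coarse solver). Define M = [[I, A_CF·A_FF⁻¹],[0, I]] · [[G_H, 0],[0, A_FF]] · [[I, 0],[A_FF⁻¹·A_FC, I]]. Then M⁻¹·A = L⁻¹ · [[G_H⁻¹·S, 0],[0, I]] · L, where L = [[I, 0],[A_FF⁻¹·A_FC, I]]; in particular M⁻¹·A is similar to the block diagonal matrix with blocks G_H⁻¹·S and the identity I_FF. -/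
open Matrix

/-- With ideal transfer operators, exact fine-point smoothing, and approximate coarse
solver `G_H`, the preconditioned matrix `M⁻¹·A` is similar (via `L = [[I,0],[A_FF⁻¹·A_FC,I]]`)
to the block diagonal matrix `[[G_H⁻¹·S, 0],[0, I]]`. -/
theorem preconditioned_similar_block_diagonal
    {C F : Type*} [Fintype C] [Fintype F] [DecidableEq C] [DecidableEq F]
    (A_CC : Matrix C C ℝ) (A_CF : Matrix C F ℝ) (A_FC : Matrix F C ℝ) (A_FF : Matrix F F ℝ)
    (G_H : Matrix C C ℝ)
    (hFF : IsUnit A_FF.det) (hGH : IsUnit G_H.det)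
    (A : Matrix (C ⊕ F) (C ⊕ F) ℝ) (hA : A = fromBlocks A_CC A_CF A_FC A_FF)
    (S : Matrix C C ℝ) (hSdef : S = A_CC - A_CF * A_FF⁻¹ * A_FC)
    (M : Matrix (C ⊕ F) (C ⊕ F) ℝ)
    (hM : M = fromBlocks 1 (A_CF * A_FF⁻¹) 0 1 * fromBlocks G_H 0 0 A_FF *
        fromBlocks 1 0 (A_FF⁻¹ * A_FC) 1)
    (L : Matrix (C ⊕ F) (C ⊕ F) ℝ) (hL : L = fromBlocks 1 0 (A_FF⁻¹ * A_FC) 1) :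
    M⁻¹ * A = L⁻¹ * fromBlocks (G_H⁻¹ * S) 0 0 1 * L := by
  subst hA hSdef hM hL
  haveI := A_FF.invertibleOfIsUnitDet hFF
  haveI := G_H.invertibleOfIsUnitDet hGH
  set U : Matrix (C ⊕ F) (C ⊕ F) ℝ := fromBlocks 1 (A_CF * A_FF⁻¹) 0 1 with hU
  set Lo : Matrix (C ⊕ F) (C ⊕ F) ℝ := fromBlocks 1 0 (A_FF⁻¹ * A_FC) 1 with hLo
  set D : Matrix (C ⊕ F) (C ⊕ F) ℝ := fromBlocks G_H 0 0 A_FF with hD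
  haveI : Invertible (1 : Matrix C C ℝ) := invertibleOne
  haveI : Invertible (1 : Matrix F F ℝ) := invertibleOne
  haveI iU : Invertible U := hU ▸ fromBlocksZero₂₁Invertible (1 : Matrix C C ℝ) (A_CF * A_FF⁻¹) (1 : Matrix F F ℝ)
  haveI iL : Invertible Lo := hLo ▸ fromBlocksZero₁₂Invertible (1 : Matrix C C ℝ) (A_FF⁻¹ * A_FC) (1 : Matrix F F ℝ)
  -- factor A through the Schur complement
  have hAfac : fromBlocks A_CC A_CF A_FC A_FF =
      U * fromBlocks (A_CC - A_CF * A_FF⁻¹ * A_FC) 0 0 A_FF * Lo := by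
    rw [hU, hLo]
    simpa [Matrix.invOf_eq_nonsing_inv] using
      fromBlocks_eq_of_invertible₂₂ A_CC A_CF A_FC A_FF
  have hDinv : D⁻¹ = fromBlocks G_H⁻¹ 0 0 A_FF⁻¹ := by
    rw [hD, inv_fromBlocks_zero₁₂_of_isUnit_iff _ _ _
      (by simp [Matrix.isUnit_iff_isUnit_det, isUnit_iff_ne_zero, hFF.ne_zero, hGH.ne_zero])]
    simp
  have hDmul : D⁻¹ * fromBlocks (A_CC - A_CF * A_FF⁻¹ * A_FC) 0 0 A_FF =
      fromBlocks (G_H⁻¹ * (A_CC - A_CF * A_FF⁻¹ * A_FC)) 0 0 1 := by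
    rw [hDinv, fromBlocks_multiply]
    simp [Matrix.nonsing_inv_mul _ hFF]
  rw [hAfac, Matrix.mul_inv_rev, Matrix.mul_inv_rev]
  have hUU : U⁻¹ * U = 1 :=
    Matrix.nonsing_inv_mul _ (isUnit_det_of_invertible U)
  calc Lo⁻¹ * (D⁻¹ * U⁻¹) * (U * fromBlocks (A_CC - A_CF * A_FF⁻¹ * A_FC) 0 0 A_FF * Lo)
      = Lo⁻¹ * ((D⁻¹ * fromBlocks (A_CC - A_CF * A_FF⁻¹ * A_FC) 0 0 A_FF) * Lo) := by
        simp only [Matrix.mul_assoc, ← Matrix.mul_assoc U⁻¹ U, hUU, Matrix.one_mul]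
    _ = Lo⁻¹ * fromBlocks (G_H⁻¹ * (A_CC - A_CF * A_FF⁻¹ * A_FC)) 0 0 1 * Lo := by
        rw [hDmul]; exact (Matrix.mul_assoc _ _ _).symm
end

section
/- Let A = [[A_CC, A_CF],[A_FC, A_FF]] be a block matrix over ℂ with A_FF invertible, let S = A_CC − A_CF·A_FF⁻¹·A_FC, let G_H be an invertible C×C matrix, and define M = [[I, A_CF·A_FF⁻¹],[0, I]] · [[G_H, 0],[0, A_FF]] · [[I, 0],[A_FF⁻¹·A_FC, I]]. Assume the index type F is nonempty. Then the set of eigenvalues of M⁻¹·A equals {1} ∪ {eigenvalues of G_H⁻¹·S}. -/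
open Matrix

lemma spectrum_fromBlocks_diag {C F : Type*} [Fintype C] [Fintype F] [DecidableEq C]
    [DecidableEq F] (B : Matrix C C ℂ) (E : Matrix F F ℂ) :
    spectrum ℂ (fromBlocks B 0 0 E) = spectrum ℂ B ∪ spectrum ℂ E := by
  ext μ
  have halg : (algebraMap ℂ (Matrix (C ⊕ F) (C ⊕ F) ℂ)) μ - fromBlocks B 0 0 E =
      fromBlocks ((algebraMap ℂ (Matrix C C ℂ)) μ - B) 0 0
        ((algebraMap ℂ (Matrix F F ℂ)) μ - E) := by
    rw [Algebra.algebraMap_eq_smul_one, Algebra.algebraMap_eq_smul_one,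
      Algebra.algebraMap_eq_smul_one, ← fromBlocks_one, fromBlocks_smul, sub_eq_add_neg,
      fromBlocks_neg, fromBlocks_add]
    simp [sub_eq_add_neg]
  rw [Set.mem_union, spectrum.mem_iff, spectrum.mem_iff, spectrum.mem_iff, halg,
    Matrix.isUnit_iff_isUnit_det, det_fromBlocks_zero₁₂, IsUnit.mul_iff,
    Matrix.isUnit_iff_isUnit_det ((algebraMap ℂ (Matrix C C ℂ)) μ - B),
    Matrix.isUnit_iff_isUnit_det ((algebraMap ℂ (Matrix F F ℂ)) μ - E)]
  tauto

/-- With ideal transfer operators, exact fine-point smoothing, and approximate coarse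
solver `G_H`, the spectrum of `M⁻¹·A` is `{1} ∪ σ(G_H⁻¹·S)`. -/
theorem preconditioned_spectrum
    {C F : Type*} [Fintype C] [Fintype F] [DecidableEq C] [DecidableEq F] [Nonempty F]
    (A_CC : Matrix C C ℂ) (A_CF : Matrix C F ℂ) (A_FC : Matrix F C ℂ) (A_FF : Matrix F F ℂ)
    (G_H : Matrix C C ℂ)
    (hFF : IsUnit A_FF.det) (hGH : IsUnit G_H.det)
    (A : Matrix (C ⊕ F) (C ⊕ F) ℂ) (hA : A = fromBlocks A_CC A_CF A_FC A_FF)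
    (S : Matrix C C ℂ) (hSdef : S = A_CC - A_CF * A_FF⁻¹ * A_FC)
    (M : Matrix (C ⊕ F) (C ⊕ F) ℂ)
    (hM : M = fromBlocks 1 (A_CF * A_FF⁻¹) 0 1 * fromBlocks G_H 0 0 A_FF *
        fromBlocks 1 0 (A_FF⁻¹ * A_FC) 1) :
    spectrum ℂ (M⁻¹ * A) = {1} ∪ spectrum ℂ (G_H⁻¹ * S) := by
  set L : Matrix (C ⊕ F) (C ⊕ F) ℂ := fromBlocks 1 (A_CF * A_FF⁻¹) 0 1 with hL
  set U : Matrix (C ⊕ F) (C ⊕ F) ℂ := fromBlocks 1 0 (A_FF⁻¹ * A_FC) 1 with hU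
  set N : Matrix (C ⊕ F) (C ⊕ F) ℂ := fromBlocks (G_H⁻¹ * S) 0 0 1 with hN
  have hffi : A_FF * A_FF⁻¹ = 1 := mul_nonsing_inv _ hFF
  have hiff : A_FF⁻¹ * A_FF = 1 := nonsing_inv_mul _ hFF
  have hUu : IsUnit U := by
    rw [Matrix.isUnit_iff_isUnit_det, hU, det_fromBlocks_zero₁₂]
    simp
  have hUinv : U * U⁻¹ = 1 := mul_nonsing_inv _ ((Matrix.isUnit_iff_isUnit_det _).mp hUu)
  have hUinv' : U⁻¹ * U = 1 := nonsing_inv_mul _ ((Matrix.isUnit_iff_isUnit_det _).mp hUu)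
  have hMdet : IsUnit M.det := by
    rw [hM, det_mul, det_mul, hL, hU, det_fromBlocks_zero₂₁,
      det_fromBlocks_zero₁₂, det_fromBlocks_zero₁₂]
    simpa using hGH.mul hFF
  -- key identity : M * (U⁻¹ * N * U) = A
  have key : M * (U⁻¹ * N * U) = A := by
    have h1 : M * U⁻¹ = L * fromBlocks G_H 0 0 A_FF := by
      rw [hM, mul_assoc, hUinv, mul_one]
    calc M * (U⁻¹ * N * U) = (M * U⁻¹) * N * U := by noncomm_ring
      _ = L * (fromBlocks G_H 0 0 A_FF * N) * U := by rw [h1, mul_assoc L]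
      _ = L * fromBlocks S 0 0 A_FF * U := by
          congr 2
          rw [hN, fromBlocks_multiply]
          have : G_H * (G_H⁻¹ * S) = S := by
            rw [← mul_assoc, mul_nonsing_inv _ hGH, one_mul]
          simp [this]
      _ = A := by
          rw [hL, hU, fromBlocks_multiply, fromBlocks_multiply, hA, hSdef]
          rw [fromBlocks_inj]
          refine ⟨?_, ?_, ?_, ?_⟩
          · simp only [Matrix.one_mul, Matrix.mul_one, Matrix.mul_zero, Matrix.zero_mul,
              add_zero, zero_add]
            rw [nonsing_inv_mul_cancel_right _ _ hFF, ← Matrix.mul_assoc, sub_add_cancel]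
          · simp [nonsing_inv_mul_cancel_right _ _ hFF]
          · simp [mul_nonsing_inv_cancel_left _ _ hFF]
          · simp
  have hMA : M⁻¹ * A = U⁻¹ * N * U := by
    rw [← key, ← mul_assoc, nonsing_inv_mul _ hMdet, one_mul]
  -- conjugation invariance
  let u : (Matrix (C ⊕ F) (C ⊕ F) ℂ)ˣ := ⟨U, U⁻¹, hUinv, hUinv'⟩
  have hconj : spectrum ℂ (U⁻¹ * N * U) = spectrum ℂ N :=
    spectrum.units_conjugate' (u := u)
  rw [hMA, hconj, hN, spectrum_fromBlocks_diag, spectrum.one_eq, Set.union_comm]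
end

section
/- Let A = [[A_CC, A_CF],[A_FC, A_FF]] with A_FF invertible and with the Schur complement S = A_CC − A_CF·A_FF⁻¹·A_FC invertible, and let D_CC be an invertible C×C matrix with S̃_C = A_FF − A_FC·D_CC⁻¹·A_CF invertible. Perform one two-level iteration with ideal interpolation P̂, ideal restriction R̂, exact coarse solve, and sSIMPLE pre-smoothing: starting from x⁰ = 0, set x_s with x_{s,C} = D_CC⁻¹·b_C − D_CC⁻¹·A_CF·q and x_{s,F} = q, where q is any F-vector (the approximate solution of S̃_C·q = b_F − A_FC·D_CC⁻¹·b_C), then x¹ = x_s + P̂·(R̂·A·P̂)⁻¹·R̂·(b − A·x_s). Then the residual r = b − A·x¹ has block components r_C = A_CF·A_FF⁻¹·r_S̃ and r_F = r_S̃, where r_S̃ = b_F − A_FC·D_CC⁻¹·b_C − S̃_C·q. -/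
open Matrix

/-- Residual of one two-level iteration with ideal transfer operators, exact coarse solve,
and sSIMPLE pre-smoothing: `r = [A_CF·A_FF⁻¹·r_S̃; r_S̃]` with
`r_S̃ = b_F − A_FC·D_CC⁻¹·b_C − S̃_C·q`. -/
theorem residual_sSIMPLE_smoothing
    {C F : Type*} [Fintype C] [Fintype F] [DecidableEq C] [DecidableEq F]
    (A_CC : Matrix C C ℝ) (A_CF : Matrix C F ℝ) (A_FC : Matrix F C ℝ) (A_FF : Matrix F F ℝ)
    (hFF : IsUnit A_FF.det)
    (hS : IsUnit (A_CC - A_CF * A_FF⁻¹ * A_FC).det)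
    (D_CC : Matrix C C ℝ) (hD : IsUnit D_CC.det)
    (Stilde : Matrix F F ℝ) (hSt : Stilde = A_FF - A_FC * D_CC⁻¹ * A_CF)
    (hStinv : IsUnit Stilde.det)
    (A : Matrix (C ⊕ F) (C ⊕ F) ℝ) (hA : A = fromBlocks A_CC A_CF A_FC A_FF)
    (Phat : Matrix (C ⊕ F) C ℝ) (hP : Phat = fromRows 1 (-(A_FF⁻¹ * A_FC)))
    (Rhat : Matrix C (C ⊕ F) ℝ) (hR : Rhat = fromCols 1 (-(A_CF * A_FF⁻¹)))
    (bC : C → ℝ) (bF : F → ℝ) (q : F → ℝ)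
    (b : C ⊕ F → ℝ) (hb : b = Sum.elim bC bF)
    (xs : C ⊕ F → ℝ)
    (hxs : xs = Sum.elim (D_CC⁻¹.mulVec bC - (D_CC⁻¹ * A_CF).mulVec q) q)
    (x1 : C ⊕ F → ℝ)
    (hx1 : x1 = xs + Phat.mulVec ((Rhat * A * Phat)⁻¹.mulVec (Rhat.mulVec (b - A.mulVec xs))))
    (rSt : F → ℝ) (hrSt : rSt = bF - (A_FC * D_CC⁻¹).mulVec bC - Stilde.mulVec q) :
    b - A.mulVec x1 = Sum.elim ((A_CF * A_FF⁻¹).mulVec rSt) rSt := by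
  subst hA hP hR hb hxs hx1 hrSt hSt
  set S : Matrix C C ℝ := A_CC - A_CF * A_FF⁻¹ * A_FC with hSdef
  have hAFF : A_FF * A_FF⁻¹ = 1 := mul_nonsing_inv _ hFF
  have hSS : S * S⁻¹ = 1 := mul_nonsing_inv _ hS
  set xC : C → ℝ := D_CC⁻¹.mulVec bC - (D_CC⁻¹ * A_CF).mulVec q with hxC
  set rSt : F → ℝ := bF - (A_FC * D_CC⁻¹).mulVec bC - (A_FF - A_FC * D_CC⁻¹ * A_CF).mulVec q
    with hrStdef
  set r0C : C → ℝ := bC - A_CC.mulVec xC - A_CF.mulVec q with hr0C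
  -- the residual after smoothing
  have hr0 : Sum.elim bC bF - (fromBlocks A_CC A_CF A_FC A_FF).mulVec (Sum.elim xC q)
      = Sum.elim r0C rSt := by
    rw [fromBlocks_mulVec]
    ext (i | i) <;>
      simp [hr0C, hrStdef, hxC, mulVec_sub, sub_mulVec, mulVec_mulVec, Matrix.mul_assoc,
        sub_eq_sub_iff_sub_eq_sub]
    ring
  -- A * Phat
  have hAP : (fromBlocks A_CC A_CF A_FC A_FF : Matrix (C ⊕ F) (C ⊕ F) ℝ) *
      (fromRows (1 : Matrix C C ℝ) (-(A_FF⁻¹ * A_FC)) : Matrix (C ⊕ F) C ℝ)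
      = fromRows S (0 : Matrix F C ℝ) := by
    rw [fromBlocks_mul_fromRows, Matrix.mul_one, Matrix.mul_one, Matrix.mul_neg, Matrix.mul_neg,
      ← Matrix.mul_assoc, ← Matrix.mul_assoc, hAFF, Matrix.one_mul, ← sub_eq_add_neg]
    simp [hSdef]
  -- coarse matrix is the Schur complement
  have hRAP : (fromCols (1 : Matrix C C ℝ) (-(A_CF * A_FF⁻¹)) : Matrix C (C ⊕ F) ℝ) *
      (fromBlocks A_CC A_CF A_FC A_FF : Matrix (C ⊕ F) (C ⊕ F) ℝ) *
      (fromRows (1 : Matrix C C ℝ) (-(A_FF⁻¹ * A_FC)) : Matrix (C ⊕ F) C ℝ) = S := by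
    rw [Matrix.mul_assoc, hAP, fromCols_mul_fromRows]
    simp
  rw [hRAP, mulVec_add, sub_add_eq_sub_sub, hr0]
  set w : C → ℝ := S⁻¹.mulVec ((fromCols 1 (-(A_CF * A_FF⁻¹))).mulVec (Sum.elim r0C rSt))
    with hw
  have hSw : S.mulVec w = r0C - (A_CF * A_FF⁻¹).mulVec rSt := by
    rw [hw, mulVec_mulVec, hSS, one_mulVec, fromCols_mulVec_sumElim]
    simp [sub_eq_add_neg, neg_mulVec]
  rw [mulVec_mulVec, hAP, fromRows_mulVec, hSw]
  ext (i | i) <;> simp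
end

section
/- Let A = [[A_CC, A_CF],[A_FC, A_FF]] be a block matrix over ℂ with A_FF invertible, let S = A_CC − A_CF·A_FF⁻¹·A_FC, let G_H be an invertible C×C matrix, let P̃ = [I; P̃_FC] be an arbitrary interpolation operator and R̂ = [I, −A_CF·A_FF⁻¹] the ideal restriction operator. Define M = [[I, A_CF·A_FF⁻¹],[0, I]]·[[G_H, 0],[0, A_FF]]·[[I, 0],[−P̃_FC, I]]. Assume F is nonempty. Then M⁻¹·A is similar (via L = [[I, 0],[−P̃_FC, I]]) to the block lower-triangular matrix [[G_H⁻¹·S, 0],[A_FF⁻¹·E_FC, I]] with E_FC = A_FC + A_FF·P̃_FC, and consequently the set of eigenvalues of M⁻¹·A equals {1} ∪ {eigenvalues of G_H⁻¹·S}. -/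
open Matrix

lemma fromBlocks_sub' {C F : Type*} [Fintype C] [Fintype F]
    (A A' : Matrix C C ℂ) (B B' : Matrix C F ℂ) (D D' : Matrix F C ℂ) (E E' : Matrix F F ℂ) :
    fromBlocks A B D E - fromBlocks A' B' D' E' =
      fromBlocks (A - A') (B - B') (D - D') (E - E') := by
  simp [sub_eq_add_neg, fromBlocks_neg, fromBlocks_add]

lemma spectrum_lower_block {C F : Type*} [Fintype C] [Fintype F]
    [DecidableEq C] [DecidableEq F] [Nonempty F]
    (X : Matrix C C ℂ) (Y : Matrix F C ℂ) :
    spectrum ℂ (fromBlocks X 0 Y (1 : Matrix F F ℂ)) = {1} ∪ spectrum ℂ X := by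
  ext μ
  rw [Set.mem_union, spectrum.mem_iff, spectrum.mem_iff,
    Algebra.algebraMap_eq_smul_one, Algebra.algebraMap_eq_smul_one]
  have h1 : (μ • (1 : Matrix (C ⊕ F) (C ⊕ F) ℂ)) - fromBlocks X 0 Y 1 =
      fromBlocks (μ • 1 - X) 0 (0 - Y) (μ • 1 - 1) := by
    rw [← fromBlocks_one, fromBlocks_smul, fromBlocks_sub']
    simp
  have h2 : (μ • (1 : Matrix F F ℂ) - 1).det = (μ - 1) ^ Fintype.card F := by
    have : μ • (1 : Matrix F F ℂ) - 1 = (μ - 1) • 1 := by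
      rw [sub_smul, one_smul]
    rw [this, det_smul, det_one, mul_one]
  rw [h1, Matrix.isUnit_iff_isUnit_det, det_fromBlocks_zero₁₂, h2,
    isUnit_iff_ne_zero, not_ne_iff, Matrix.isUnit_iff_isUnit_det,
    isUnit_iff_ne_zero, not_ne_iff, mul_eq_zero, pow_eq_zero_iff Fintype.card_ne_zero,
    sub_eq_zero, Set.mem_singleton_iff]
  tauto

/-- With simplified interpolation `P̃ = [I; P̃_FC]`, ideal restriction
`R̂ = [I, −A_CF·A_FF⁻¹]`, approximate coarse solver `G_H`, and exact fine-point smoothing,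
`M⁻¹·A` is similar (via `L = [[I,0],[−P̃_FC,I]]`) to the block lower-triangular matrix
`[[G_H⁻¹·S, 0],[A_FF⁻¹·E_FC, I]]`, and its spectrum is `{1} ∪ σ(G_H⁻¹·S)`. -/
theorem simplified_interpolation_spectrum
    {C F : Type*} [Fintype C] [Fintype F] [DecidableEq C] [DecidableEq F] [Nonempty F]
    (A_CC : Matrix C C ℂ) (A_CF : Matrix C F ℂ) (A_FC : Matrix F C ℂ) (A_FF : Matrix F F ℂ)
    (G_H : Matrix C C ℂ) (Ptilde_FC : Matrix F C ℂ)
    (hFF : IsUnit A_FF.det) (hGH : IsUnit G_H.det)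
    (A : Matrix (C ⊕ F) (C ⊕ F) ℂ) (hA : A = fromBlocks A_CC A_CF A_FC A_FF)
    (S : Matrix C C ℂ) (hSdef : S = A_CC - A_CF * A_FF⁻¹ * A_FC)
    (M : Matrix (C ⊕ F) (C ⊕ F) ℂ)
    (hM : M = fromBlocks 1 (A_CF * A_FF⁻¹) 0 1 * fromBlocks G_H 0 0 A_FF *
        fromBlocks 1 0 (-Ptilde_FC) 1)
    (L : Matrix (C ⊕ F) (C ⊕ F) ℂ) (hL : L = fromBlocks 1 0 (-Ptilde_FC) 1)
    (E_FC : Matrix F C ℂ) (hEFC : E_FC = A_FC + A_FF * Ptilde_FC) :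
    M⁻¹ * A = L⁻¹ * fromBlocks (G_H⁻¹ * S) 0 (A_FF⁻¹ * E_FC) 1 * L ∧
      spectrum ℂ (M⁻¹ * A) = {1} ∪ spectrum ℂ (G_H⁻¹ * S) := by
  set U : Matrix (C ⊕ F) (C ⊕ F) ℂ := fromBlocks 1 (A_CF * A_FF⁻¹) 0 1 with hU
  set D : Matrix (C ⊕ F) (C ⊕ F) ℂ := fromBlocks G_H 0 0 A_FF with hD
  set T : Matrix (C ⊕ F) (C ⊕ F) ℂ := fromBlocks (G_H⁻¹ * S) 0 (A_FF⁻¹ * E_FC) 1 with hT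
  have hGi : G_H * G_H⁻¹ = 1 := mul_nonsing_inv _ hGH
  have hFi : A_FF * A_FF⁻¹ = 1 := mul_nonsing_inv _ hFF
  have hFi' : A_FF⁻¹ * A_FF = 1 := nonsing_inv_mul _ hFF
  have hcan1 : A_CF * A_FF⁻¹ * A_FF = A_CF := by
    rw [Matrix.mul_assoc, hFi', Matrix.mul_one]
  have hcan2 : A_CF * A_FF⁻¹ * (A_FF * Ptilde_FC) = A_CF * Ptilde_FC := by
    rw [← Matrix.mul_assoc, hcan1]
  have hLdet : IsUnit L.det := by
    rw [hL, det_fromBlocks_zero₁₂, det_one, det_one, one_mul]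
    exact isUnit_one
  have hLL : L * L⁻¹ = 1 := mul_nonsing_inv _ hLdet
  have hDT : D * T = fromBlocks S 0 E_FC A_FF := by
    rw [hD, hT]
    simp [fromBlocks_multiply, ← Matrix.mul_assoc, hGi, hFi]
  have hUDT : U * fromBlocks S 0 E_FC A_FF =
      fromBlocks (A_CC + A_CF * Ptilde_FC) A_CF E_FC A_FF := by
    rw [hU]
    simp only [fromBlocks_multiply, Matrix.one_mul, Matrix.mul_one, Matrix.zero_mul,
      Matrix.mul_zero, add_zero, zero_add, hcan1]
    rw [hSdef, hEFC, Matrix.mul_add, hcan2]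
    abel_nf
  have hfin : fromBlocks (A_CC + A_CF * Ptilde_FC) A_CF E_FC A_FF * L = A := by
    rw [hL, hA, hEFC]
    simp only [fromBlocks_multiply, Matrix.one_mul, Matrix.mul_one, Matrix.zero_mul,
      Matrix.mul_zero, add_zero, zero_add, Matrix.mul_neg, add_neg_cancel_right]
  have key : M * (L⁻¹ * T * L) = A := by
    calc M * (L⁻¹ * T * L) = (U * D) * ((L * L⁻¹) * (T * L)) := by
          rw [hM, ← hL]; simp only [Matrix.mul_assoc]
      _ = U * (D * T) * L := by rw [hLL, Matrix.one_mul]; simp only [Matrix.mul_assoc]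
      _ = A := by rw [hDT, hUDT, hfin]
  have hMdet : IsUnit M.det := by
    rw [hM, det_mul, det_mul, det_fromBlocks_zero₂₁, det_fromBlocks_zero₂₁,
      det_fromBlocks_zero₁₂]
    simpa using hGH.mul hFF
  have hsim : M⁻¹ * A = L⁻¹ * T * L := by
    rw [← key, ← Matrix.mul_assoc, nonsing_inv_mul _ hMdet, Matrix.one_mul]
  refine ⟨hsim, ?_⟩
  rw [hsim]
  have hLunit : IsUnit L := (Matrix.isUnit_iff_isUnit_det L).mpr hLdet
  obtain ⟨u, hu⟩ := hLunit
  have hLinv : L⁻¹ = (↑u⁻¹ : Matrix (C ⊕ F) (C ⊕ F) ℂ) := by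
    rw [← hu, Matrix.nonsing_inv_eq_ringInverse, Ring.inverse_unit]
  rw [hLinv, ← hu, spectrum.units_conjugate', hT, spectrum_lower_block]
end
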